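/- arXiv:1901.05760 — 2 statements merged into one kernel-verified Lean document; each statement's English description precedes it below -/
import Mathlib

section
/- Let γ > 0 and define the rate of user 2 with improper signaling as R₂(p₂, κ₂) = (1/2) log₂( ((p₂ H + σ²)² − (κ₂ p₂ H)²)/σ⁴ ) where H > 0 and σ² > 0. Then the constraint R₂(p₂, κ₂) = c for a constant c > 0, i.e., (p₂H + σ²)² − (κ₂p₂H)² = σ⁴ 2^{2c}, determines, for each κ₂ ∈ [0,1], a unique positive power p₂ = (σ²/(H(1−κ₂²)))·(√((2^{2c}−1)(1−κ₂²) + 1) − 1) when κ₂ < 1, and p₂ = σ²(2^{2c}−1)/(2H) when κ₂ = 1; moreover this p₂ is strictly increasing in κ₂ on [0,1]. -/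
/-- Inverting the Z-IC rate of user 2: the constraint
`(p₂H + σ²)² − (κ₂p₂H)² = σ⁴·2^{2c}` determines for each `κ₂ ∈ [0,1]` a unique
positive power given by a closed-form expression, and this power is strictly
increasing in `κ₂` on `[0,1]`. -/
theorem stmt_5 (σ2 H c : ℝ) (hσ : 0 < σ2) (hH : 0 < H) (hc : 0 < c) :
    (∀ κ ∈ Set.Icc (0 : ℝ) 1, ∀ p : ℝ, 0 < p →
      (p * H + σ2) ^ 2 - (κ * p * H) ^ 2 = σ2 ^ 2 * (2 : ℝ) ^ (2 * c) →
      p = if κ < 1 then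
            σ2 / (H * (1 - κ ^ 2)) *
              (Real.sqrt (((2 : ℝ) ^ (2 * c) - 1) * (1 - κ ^ 2) + 1) - 1)
          else σ2 * ((2 : ℝ) ^ (2 * c) - 1) / (2 * H)) ∧
    StrictMonoOn
      (fun κ : ℝ => if κ < 1 then
          σ2 / (H * (1 - κ ^ 2)) *
            (Real.sqrt (((2 : ℝ) ^ (2 * c) - 1) * (1 - κ ^ 2) + 1) - 1)
        else σ2 * ((2 : ℝ) ^ (2 * c) - 1) / (2 * H))
      (Set.Icc 0 1) := by
  set A : ℝ := (2 : ℝ) ^ (2 * c) with hAdef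
  have hA1 : 1 < A := by
    have h1 : (0 : ℝ) < 2 * c := by linarith
    have := (Real.one_lt_rpow_iff_of_pos (x := (2:ℝ)) (y := 2*c) (by norm_num)).mpr
      (Or.inl ⟨by norm_num, h1⟩)
    exact this
  set B : ℝ := A - 1 with hBdef
  have hB0 : 0 < B := by linarith
  -- closed form rewritten uniformly
  have h_eq : ∀ κ ∈ Set.Icc (0 : ℝ) 1,
      (if κ < 1 then
          σ2 / (H * (1 - κ ^ 2)) *
            (Real.sqrt (B * (1 - κ ^ 2) + 1) - 1)
        else σ2 * B / (2 * H))
      = σ2 / H * (B / (Real.sqrt (B * (1 - κ ^ 2) + 1) + 1)) := by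
    intro κ hκ
    obtain ⟨hκ0, hκ1⟩ := hκ
    by_cases hlt : κ < 1
    · rw [if_pos hlt]
      set t : ℝ := 1 - κ ^ 2 with htdef
      have ht0 : 0 < t := by nlinarith
      have harg : 0 ≤ B * t + 1 := by nlinarith
      set s : ℝ := Real.sqrt (B * t + 1) with hsdef
      have hs2 : s ^ 2 = B * t + 1 := Real.sq_sqrt harg
      have hs0 : 0 ≤ s := Real.sqrt_nonneg _
      have hsp : 0 < s + 1 := by linarith
      field_simp
      linear_combination hs2
    · rw [if_neg hlt]
      have hκe : κ = 1 := le_antisymm hκ1 (le_of_not_gt hlt)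
      subst hκe
      norm_num
      field_simp
  constructor
  · intro κ hκ p hp heq
    obtain ⟨hκ0, hκ1⟩ := hκ
    by_cases hlt : κ < 1
    · rw [if_pos hlt]
      set t : ℝ := 1 - κ ^ 2 with htdef
      have ht0 : 0 < t := by nlinarith
      have harg : 0 ≤ B * t + 1 := by nlinarith
      set s : ℝ := Real.sqrt (B * t + 1) with hsdef
      have hs2 : s ^ 2 = B * t + 1 := Real.sq_sqrt harg
      have hs0 : 0 ≤ s := Real.sqrt_nonneg _
      -- key: (tHp + σ2)^2 = σ2^2 (B t + 1)
      have hk2 : κ ^ 2 = 1 - t := by rw [htdef]; ring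
      have key : (t * H * p + σ2) ^ 2 = (σ2 * s) ^ 2 := by
        have : (σ2 * s) ^ 2 = σ2 ^ 2 * (B * t + 1) := by
          rw [mul_pow, hs2]
        rw [this]
        linear_combination t * heq + t * (p * H) ^ 2 * hk2
      have hpos1 : 0 ≤ t * H * p + σ2 := by positivity
      have hpos2 : 0 ≤ σ2 * s := by positivity
      have heq2 : t * H * p + σ2 = σ2 * s := by
        calc t * H * p + σ2 = Real.sqrt ((t * H * p + σ2) ^ 2) :=
              (Real.sqrt_sq hpos1).symm
          _ = Real.sqrt ((σ2 * s) ^ 2) := by rw [key]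
          _ = σ2 * s := Real.sqrt_sq hpos2
      have hHt : H * t ≠ 0 := by positivity
      field_simp
      linear_combination heq2
    · rw [if_neg hlt]
      have hκe : κ = 1 := le_antisymm hκ1 (le_of_not_gt hlt)
      subst hκe
      have : 2 * p * H * σ2 = σ2 ^ 2 * B := by nlinarith [heq]
      field_simp
      nlinarith [this]
  · intro κ₁ hκ₁ κ₂ hκ₂ hlt
    simp only
    have e1 := h_eq κ₁ hκ₁
    have e2 := h_eq κ₂ hκ₂
    rw [e1, e2]
    obtain ⟨h10, h11⟩ := hκ₁
    obtain ⟨h20, h21⟩ := hκ₂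
    have ht : 1 - κ₂ ^ 2 < 1 - κ₁ ^ 2 := by nlinarith
    have hn2 : (0:ℝ) ≤ 1 - κ₂ ^ 2 := by nlinarith
    have harg2 : 0 ≤ B * (1 - κ₂ ^ 2) + 1 := by
      nlinarith [mul_nonneg hB0.le hn2]
    have hsqlt : Real.sqrt (B * (1 - κ₂ ^ 2) + 1) < Real.sqrt (B * (1 - κ₁ ^ 2) + 1) := by
      apply Real.sqrt_lt_sqrt harg2
      nlinarith
    have hd2 : 0 < Real.sqrt (B * (1 - κ₂ ^ 2) + 1) + 1 := by
      have := Real.sqrt_nonneg (B * (1 - κ₂ ^ 2) + 1); linarith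
    have hdiv : B / (Real.sqrt (B * (1 - κ₁ ^ 2) + 1) + 1)
        < B / (Real.sqrt (B * (1 - κ₂ ^ 2) + 1) + 1) := by
      apply div_lt_div_of_pos_left hB0 hd2
      linarith
    have hcoef : 0 < σ2 / H := by positivity
    exact mul_lt_mul_of_pos_left hdiv hcoef
end

section
/- Fix σ² > 0, G > 0 (interference gain), and constants a = 1 − γ(1)/γ(2α) ∈ ℝ, b = γ(2)/γ(2α) − 1 ≥ 0 with γ as above and α ∈ [0,1]. Define 𝒫(κ) = (σ²/(G(1−κ²)))·(√(a² + (1−κ²)b) − a) for κ ∈ [0,1). Then 𝒫 extends continuously to κ = 1 with 𝒫(1) = σ² b/(2Ga) when a > 0, and 𝒫 is nondecreasing in κ on [0,1) when a ≥ 0. -/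
private lemma key_eq (σ2 G a b : ℝ) (hG : 0 < G) (hb : 0 ≤ b) (ha : 0 ≤ a)
    {κ : ℝ} (hκ : κ ∈ Set.Ico (0:ℝ) 1) :
    σ2 / (G * (1 - κ ^ 2)) * (Real.sqrt (a ^ 2 + (1 - κ ^ 2) * b) - a)
      = σ2 * b / (G * (Real.sqrt (a ^ 2 + (1 - κ ^ 2) * b) + a)) := by
  obtain ⟨h0, h1⟩ := hκ
  have ht : 0 < 1 - κ ^ 2 := by nlinarith
  set t := 1 - κ ^ 2 with htdef
  have hnn : 0 ≤ a ^ 2 + t * b := by positivity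
  set s := Real.sqrt (a ^ 2 + t * b) with hsdef
  have hs : s ^ 2 = a ^ 2 + t * b := Real.sq_sqrt hnn
  have hsnn : 0 ≤ s := Real.sqrt_nonneg _
  by_cases hD : s + a = 0
  · have hs0 : s = 0 := by linarith
    have ha0 : a = 0 := by linarith
    have hb0 : t * b = 0 := by nlinarith
    have : b = 0 := by
      rcases mul_eq_zero.1 hb0 with h | h
      · exact absurd h (ne_of_gt ht)
      · exact h
    simp [hs0, ha0, this]
  · field_simp
    linear_combination σ2 * hs

/-- Properties of the maximal power of the improper user
`𝒫(κ) = (σ²/(G(1−κ²)))(√(a² + (1−κ²)b) − a)` for `κ ∈ [0,1)`: when `a > 0` it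
extends continuously to `κ = 1` with value `σ²b/(2Ga)`, and when `a ≥ 0` it is
nondecreasing in `κ` on `[0,1)`. -/
theorem stmt_10 (σ2 G a b : ℝ) (hσ : 0 < σ2) (hG : 0 < G) (hb : 0 ≤ b) :
    (0 < a →
      Filter.Tendsto
        (fun κ : ℝ => σ2 / (G * (1 - κ ^ 2)) *
          (Real.sqrt (a ^ 2 + (1 - κ ^ 2) * b) - a))
        (nhdsWithin 1 (Set.Ico 0 1)) (nhds (σ2 * b / (2 * G * a)))) ∧
    (0 ≤ a →
      MonotoneOn
        (fun κ : ℝ => σ2 / (G * (1 - κ ^ 2)) *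
          (Real.sqrt (a ^ 2 + (1 - κ ^ 2) * b) - a))
        (Set.Ico 0 1)) := by
  constructor
  · intro ha
    have ha' : 0 ≤ a := le_of_lt ha
    have heq : (fun κ : ℝ => σ2 / (G * (1 - κ ^ 2)) *
          (Real.sqrt (a ^ 2 + (1 - κ ^ 2) * b) - a)) =ᶠ[nhdsWithin 1 (Set.Ico 0 1)]
        (fun κ : ℝ => σ2 * b / (G * (Real.sqrt (a ^ 2 + (1 - κ ^ 2) * b) + a))) := by
      filter_upwards [self_mem_nhdsWithin] with κ hκ
      exact key_eq σ2 G a b hG hb ha' hκ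
    refine Filter.Tendsto.congr' heq.symm ?_
    have hca : ContinuousAt (fun κ : ℝ => σ2 * b /
        (G * (Real.sqrt (a ^ 2 + (1 - κ ^ 2) * b) + a))) 1 := by
      apply ContinuousAt.div
      · fun_prop
      · fun_prop
      · have : Real.sqrt (a ^ 2 + (1 - (1:ℝ) ^ 2) * b) = a := by
          simp [Real.sqrt_sq ha', ha']
        simp only [this]
        positivity
    have := hca.tendsto.mono_left (nhdsWithin_le_nhds (s := Set.Ico (0:ℝ) 1))
    convert this using 2
    have : Real.sqrt (a ^ 2 + (1 - (1:ℝ) ^ 2) * b) = a := by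
      norm_num
      exact Real.sqrt_sq ha'
    rw [this]
    ring
  · intro ha
    intro x hx y hy hxy
    dsimp only
    rw [key_eq σ2 G a b hG hb ha hx, key_eq σ2 G a b hG hb ha hy]
    have hx0 := hx.1
    have hy1 := hy.2
    have htx : 0 < 1 - x ^ 2 := by nlinarith [hx.2]
    have hty : 0 < 1 - y ^ 2 := by nlinarith [hy.1]
    have hmono : 1 - y ^ 2 ≤ 1 - x ^ 2 := by nlinarith [hy.1]
    have hsle : Real.sqrt (a ^ 2 + (1 - y ^ 2) * b) ≤ Real.sqrt (a ^ 2 + (1 - x ^ 2) * b) := by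
      apply Real.sqrt_le_sqrt
      nlinarith
    by_cases hb0 : b = 0
    · simp [hb0]
    · have hbpos : 0 < b := lt_of_le_of_ne hb (Ne.symm hb0)
      have hDy : 0 < Real.sqrt (a ^ 2 + (1 - y ^ 2) * b) + a := by
        have : 0 < a ^ 2 + (1 - y ^ 2) * b := by positivity
        have := Real.sqrt_pos.mpr this
        linarith
      apply div_le_div_of_nonneg_left (by positivity) (by positivity)
      have := mul_le_mul_of_nonneg_left hsle hG.le
      nlinarith
end
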